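/- The 3-dimensional ℂ-algebra 𝒩₃ with nonzero products e₁e₁ = e₂, e₁e₃ = e₃, e₃e₁ = -e₃ satisfies x²x = 0 and xx² = 0 for all x, but is not nilpotent: e₃ ∈ Aⁿ for every n ≥ 1 (where A¹ = A and A^{n+1} = span of products A^i A^j with i + j = n+1). -/
import Mathlib


/-- Multiplication of 𝒩₃: e₁e₁ = e₂, e₁e₃ = e₃, e₃e₁ = -e₃. -/
def mulN3 (v w : Fin 3 → ℂ) : Fin 3 → ℂ := ![0, v 0 * w 0, v 0 * w 2 - v 2 * w 0]

/-- `IsProd z n` : z is a product of exactly n elements of the algebra 𝒩₃,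
in some bracketing. -/
inductive IsProd : (Fin 3 → ℂ) → ℕ → Prop
  | base (x : Fin 3 → ℂ) : IsProd x 1
  | mul {x y : Fin 3 → ℂ} {m n : ℕ} : IsProd x m → IsProd y n → IsProd (mulN3 x y) (m + n)

/-- Aⁿ for 𝒩₃: A¹ = A, A^{n+1} = Σ_{i+j=n+1} A^i A^j, equivalently the span of
all products of exactly n elements. -/
noncomputable def pw (n : ℕ) : Submodule ℂ (Fin 3 → ℂ) := Submodule.span ℂ {z | IsProd z n}

/-- 𝒩₃ satisfies x²x = 0 and xx² = 0 for all x, but is not nilpotent: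
e₃ ∈ Aⁿ for every n ≥ 1. -/
theorem stmt_16 :
    (∀ x : Fin 3 → ℂ, mulN3 (mulN3 x x) x = 0 ∧ mulN3 x (mulN3 x x) = 0) ∧
    (∀ n : ℕ, 1 ≤ n → (![0, 0, 1] : Fin 3 → ℂ) ∈ pw n) := by
  constructor
  · intro x
    constructor <;> · funext i; fin_cases i <;> simp [mulN3] <;> ring_nf <;> tauto
  · have he : mulN3 ![1, 0, 0] ![0, 0, 1] = ![0, 0, 1] := by
      funext i; fin_cases i <;> simp [mulN3]
    have key : ∀ n, 1 ≤ n → IsProd (![0, 0, 1] : Fin 3 → ℂ) n := by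
      intro n hn
      induction n with
      | zero => omega
      | succ k ih =>
        rcases Nat.eq_or_lt_of_le hn with h | h
        · rw [← h]; exact IsProd.base _
        · have hk : 1 ≤ k := by omega
          have := IsProd.mul (IsProd.base (![1, 0, 0] : Fin 3 → ℂ)) (ih hk)
          rw [he, Nat.add_comm] at this; exact this
    intro n hn
    exact Submodule.subset_span (key n hn)
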